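/- Let V be a finite nonempty type, α a linearly ordered type, and p, k natural numbers with 1 ≤ p ≤ k. Let G be a simple graph on V with at most p connected components and m : V → α a value assignment whose image contains at least k + 1 distinct values. Then one min-update step increases the potential by at least k + 1 − p: Φ_k(step(G, m)) ≥ Φ_k(m) + (k + 1 − p). -/

import Mathlib

open Finset in
/-- The rank of a vertex `v` under value assignment `m`: the number of distinct
values in the image of `m` that are strictly smaller than `m v`. -/
def rk {V α : Type*} [Fintype V] [LinearOrder α] (m : V → α) (v : V) : ℕ :=
  ((univ.image m).filter (· < m v)).card

open scoped Classical in
/-- One min-update step: each vertex takes the minimum of `m` over its closed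
neighborhood `{v} ∪ {u : G.Adj u v}`. -/
noncomputable def step {V α : Type*} [Fintype V] [LinearOrder α]
    (G : SimpleGraph V) (m : V → α) (v : V) : α :=
  (insert v (Finset.univ.filter (fun u => G.Adj u v))).inf'
    (Finset.insert_nonempty _ _) m

/-- The potential function `Φ_k(m) = Σ_v (k - r_m(v))` (truncated subtraction). -/
def Phi {V α : Type*} [Fintype V] [LinearOrder α] (k : ℕ) (m : V → α) : ℕ :=
  ∑ v, (k - rk m v)

/-! Write `f = k - r_m` and `g = k - r_{step m}`. Since the new value at `v` is at most the old
value at every vertex of the closed neighbourhood of `v`, we have `f u ≤ g v` for all such `u`.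
Along a path inside a component `C` from a minimiser to a maximiser of `f`, the increments
`g - f` therefore telescope to at least `max_C f - min_C f`. The intervals `[min_C f, max_C f]`
cover all values of `f`, and these include every number `0, …, k` because there are more than
`k` distinct values; hence `k + 1 ≤ Σ_C (max_C f - min_C f + 1) ≤ (Φ_k(step m) - Φ_k(m)) + p`. -/

open Finset

section Rank

variable {α : Type*} [LinearOrder α]

lemma Finset.strictMonoOn_card_filter_lt (s : Finset α) :
    StrictMonoOn (fun a => (s.filter (· < a)).card) s := by
  intro a ha b _ hab
  refine card_lt_card ⟨fun x hx => ?_, fun hsub => ?_⟩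
  · simp only [mem_filter] at hx ⊢
    exact ⟨hx.1, hx.2.trans hab⟩
  · simpa using hsub (mem_filter.2 ⟨ha, hab⟩)

lemma Finset.image_card_filter_lt (s : Finset α) :
    s.image (fun a => (s.filter (· < a)).card) = range s.card := by
  refine eq_of_subset_of_card_le ?_ ?_
  · intro j hj
    obtain ⟨a, ha, rfl⟩ := mem_image.1 hj
    exact mem_range.2 (card_lt_card (filter_ssubset.2 ⟨a, ha, lt_irrefl a⟩))
  · rw [card_range, card_image_of_injOn s.strictMonoOn_card_filter_lt.injOn]

end Rank

section Step

variable {V α : Type*} [Fintype V] [LinearOrder α]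

lemma image_rk (m : V → α) : univ.image (rk m) = range (univ.image m).card := by
  rw [← (univ.image m).image_card_filter_lt, image_image]
  rfl

lemma le_card_image_tsub_rk {m : V → α} {k : ℕ} (hm : k + 1 ≤ (univ.image m).card) :
    k + 1 ≤ (univ.image fun v => k - rk m v).card := by
  suffices range (k + 1) ⊆ univ.image fun v => k - rk m v by
    simpa using card_le_card this
  intro j hj
  have : k - j ∈ univ.image (rk m) := by
    rw [image_rk, mem_range]
    have := mem_range.1 hj
    omega
  obtain ⟨v, -, hv⟩ := mem_image.1 this
  exact mem_image.2 ⟨v, mem_univ v, by have := mem_range.1 hj; omega⟩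

lemma rk_le_rk {m m' : V → α} (himage : univ.image m' ⊆ univ.image m) {u v : V}
    (hle : m' v ≤ m u) : rk m' v ≤ rk m u := by
  refine card_le_card fun a ha => ?_
  simp only [mem_filter] at ha ⊢
  exact ⟨himage ha.1, ha.2.trans_le hle⟩

variable (G : SimpleGraph V) (m : V → α)

lemma step_le_self (v : V) : step G m v ≤ m v := by
  classical
  exact inf'_le _ (mem_insert_self v _)

lemma step_le_of_adj {u v : V} (h : G.Adj u v) : step G m v ≤ m u := by
  classical
  exact inf'_le _ (mem_insert_of_mem (mem_filter.2 ⟨mem_univ u, h⟩))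

lemma image_step_subset : univ.image (step G m) ⊆ univ.image m := by
  classical
  intro a ha
  obtain ⟨v, -, rfl⟩ := mem_image.1 ha
  obtain ⟨u, -, hu⟩ := exists_mem_eq_inf' (insert_nonempty v _) m
  exact mem_image.2 ⟨u, mem_univ u, hu.symm⟩

lemma rk_step_le_self (v : V) : rk (step G m) v ≤ rk m v :=
  rk_le_rk (image_step_subset G m) (step_le_self G m v)

lemma rk_step_le_of_adj {u v : V} (h : G.Adj u v) : rk (step G m) v ≤ rk m u :=
  rk_le_rk (image_step_subset G m) (step_le_of_adj G m h)

end Step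

namespace SimpleGraph

variable {V : Type*} {G : SimpleGraph V} {f g : V → ℕ}

lemma Walk.le_add_sum_map_support_tsub (hfg : ∀ x y, G.Adj x y → f y ≤ g x) {x u : V}
    (w : G.Walk x u) : f u ≤ f x + (w.support.map fun v => g v - f v).sum := by
  induction w with
  | nil => exact Nat.le_add_right _ _
  | @cons x y u h w ih =>
    rw [support_cons, List.map_cons, List.sum_cons, ← add_assoc]
    exact ih.trans (Nat.add_le_add_right ((hfg x y h).trans le_add_tsub) _)

variable [Fintype V]

open scoped Classical in
lemma ConnectedComponent.tsub_le_sum_tsub (hfg : ∀ x y, G.Adj x y → f y ≤ g x)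
    {c : G.ConnectedComponent} {x u : V} (hx : G.connectedComponentMk x = c)
    (hu : G.connectedComponentMk u = c) :
    f u - f x ≤ ∑ v with G.connectedComponentMk v = c, (g v - f v) := by
  obtain ⟨w⟩ := ConnectedComponent.exact (hx.trans hu.symm)
  have hsupport : w.bypass.support.toFinset ⊆ univ.filter (G.connectedComponentMk · = c) := by
    intro v hv
    have hv := w.support_bypass_subset_support (List.mem_toFinset.1 hv)
    simpa [← hx] using (ConnectedComponent.sound ⟨w.takeUntil v hv⟩).symm
  calc f u - f x ≤ (w.bypass.support.map fun v => g v - f v).sum :=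
        tsub_le_iff_left.2 (w.bypass.le_add_sum_map_support_tsub hfg)
    _ = ∑ v ∈ w.bypass.support.toFinset, (g v - f v) :=
        (List.sum_toFinset _ w.bypass_isPath.support_nodup).symm
    _ ≤ _ := sum_le_sum_of_subset hsupport

lemma ConnectedComponent.exists_min_max (f : V → ℕ) (c : G.ConnectedComponent) :
    ∃ x u, G.connectedComponentMk x = c ∧ G.connectedComponentMk u = c ∧
      ∀ v, G.connectedComponentMk v = c → f x ≤ f v ∧ f v ≤ f u := by
  classical
  obtain ⟨v, hv⟩ := c.exists_rep
  have hne : (univ.filter (G.connectedComponentMk · = c)).Nonempty :=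
    ⟨v, mem_filter.2 ⟨mem_univ v, hv⟩⟩
  obtain ⟨x, hx, hxmin⟩ := exists_min_image _ f hne
  obtain ⟨u, hu, humax⟩ := exists_max_image _ f hne
  refine ⟨x, u, (mem_filter.1 hx).2, (mem_filter.1 hu).2, fun w hw => ?_⟩
  have hw : w ∈ univ.filter (G.connectedComponentMk · = c) := mem_filter.2 ⟨mem_univ w, hw⟩
  exact ⟨hxmin w hw, humax w hw⟩

lemma card_image_le_sum_tsub_add_card_connectedComponent
    (hfg : ∀ x y, G.Adj x y → f y ≤ g x) :
    (univ.image f).card ≤ ∑ v, (g v - f v) + Nat.card G.ConnectedComponent := by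
  classical
  have : Fintype G.ConnectedComponent := Fintype.ofFinite _
  choose lo hi hlo hhi hbounds using ConnectedComponent.exists_min_max (G := G) f
  have hcover : univ.image f ⊆ univ.biUnion fun c => Icc (f (lo c)) (f (hi c)) := by
    intro j hj
    obtain ⟨v, -, rfl⟩ := mem_image.1 hj
    exact mem_biUnion.2 ⟨_, mem_univ _, mem_Icc.2 (hbounds _ v rfl)⟩
  calc (univ.image f).card
      ≤ ∑ c, (Icc (f (lo c)) (f (hi c))).card := (card_le_card hcover).trans card_biUnion_le
    _ = ∑ c, (f (hi c) - f (lo c)) + Nat.card G.ConnectedComponent := by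
        rw [Nat.card_eq_fintype_card, ← card_univ, card_eq_sum_ones, ← sum_add_distrib]
        refine sum_congr rfl fun c _ => ?_
        have := (hbounds c (lo c) (hlo c)).2
        rw [Nat.card_Icc]
        omega
    _ ≤ ∑ c, ∑ v with G.connectedComponentMk v = c, (g v - f v)
          + Nat.card G.ConnectedComponent := by
        gcongr with c
        exact ConnectedComponent.tsub_le_sum_tsub hfg (hlo c) (hhi c)
    _ = ∑ v, (g v - f v) + Nat.card G.ConnectedComponent := by
        congr 1
        convert sum_fiberwise univ G.connectedComponentMk fun v => g v - f v

end SimpleGraph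

theorem phi_step_increase_of_many_values_general {V α : Type*} [Fintype V]
    [LinearOrder α] (p k : ℕ) (G : SimpleGraph V)
    (hG : Nat.card G.ConnectedComponent ≤ p)
    (m : V → α) (hm : k + 1 ≤ (Finset.univ.image m).card) :
    Phi k (step G m) ≥ Phi k m + (k + 1 - p) := by
  set f : V → ℕ := fun v => k - rk m v
  set g : V → ℕ := fun v => k - rk (step G m) v
  have hself (v : V) : f v ≤ g v := Nat.sub_le_sub_left (rk_step_le_self G m v) k
  have hadj (x y : V) (h : G.Adj x y) : f y ≤ g x :=
    Nat.sub_le_sub_left (rk_step_le_of_adj G m h.symm) k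
  have hgain : Phi k (step G m) = Phi k m + ∑ v, (g v - f v) := by
    rw [Phi, Phi, ← sum_add_distrib]
    exact sum_congr rfl fun v _ => (add_tsub_cancel_of_le (hself v)).symm
  have hcount := G.card_image_le_sum_tsub_add_card_connectedComponent hadj
  have hvalues : k + 1 ≤ (univ.image f).card := le_card_image_tsub_rk hm
  omega

/-- With at most `p ≤ k` connected components and at least `k + 1`
distinct values, one min-update step increases `Φ_k` by at least `k + 1 - p`. -/
theorem phi_step_increase_of_many_values {V α : Type*} [Fintype V] [Nonempty V]
    [LinearOrder α] (p k : ℕ) (hp : 1 ≤ p) (hpk : p ≤ k) (G : SimpleGraph V)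
    (hG : Nat.card G.ConnectedComponent ≤ p)
    (m : V → α) (hm : k + 1 ≤ (Finset.univ.image m).card) :
    Phi k (step G m) ≥ Phi k m + (k + 1 - p) :=
  phi_step_increase_of_many_values_general p k G hG m hm
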